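/- arXiv:2507.18395 — 2 statements merged into one kernel-verified Lean document; each statement's English description precedes it below -/
import Mathlib

section
/- Let n ≥ 1, let β_1,…,β_n > 0 be volatilities and ω_1,…,ω_n > 0 risk premium factors with Σ_{k=1}^n ω_k = 1, and let λ ∈ ℝ. Then the weight vector π = (ω_1,…,ω_n) is the unique maximizer of the growth rate g(π) = λ + Σ_{k=1}^n (β_k)²(π_k ω_k − (π_k)²/2) over all admissible weight vectors π ∈ ℝ^n; that is, for every π ∈ ℝ^n with Σ_{k=1}^n π_k = 1 one has g(π) ≤ g(ω), with equality if and only if π = ω. -/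
open Finset

/-- The growth rate of a portfolio of `n` atoms with weight vector `π`, given the
generalized risk-adjusted return `lam`, volatilities `β` and risk premium factors `ω`:
`g(π) = λ + Σ_k (β_k)^2 (π_k ω_k − (π_k)^2 / 2)`. -/
noncomputable def growthRate (n : ℕ) (lam : ℝ) (β ω π : Fin n → ℝ) : ℝ :=
  lam + ∑ k, (β k) ^ 2 * (π k * ω k - (π k) ^ 2 / 2)

/-- the weight vector `ω` is the unique maximizer of the growth rate over all
admissible weight vectors (those summing to one). -/
theorem atomGOP_weights_eq_riskPremiumFactors
    (n : ℕ) (hn : 1 ≤ n) (β ω : Fin n → ℝ)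
    (hβ : ∀ k, 0 < β k) (hω : ∀ k, 0 < ω k)
    (hsum : ∑ k, ω k = 1) (lam : ℝ) :
    ∀ π : Fin n → ℝ, ∑ k, π k = 1 →
      growthRate n lam β ω π ≤ growthRate n lam β ω ω ∧
        (growthRate n lam β ω π = growthRate n lam β ω ω ↔ π = ω) := by
  intro π hπ
  have key : growthRate n lam β ω ω - growthRate n lam β ω π
      = ∑ k, (β k) ^ 2 * (π k - ω k) ^ 2 / 2 := by
    simp only [growthRate, add_sub_add_left_eq_sub, ← Finset.sum_sub_distrib]
    exact Finset.sum_congr rfl fun k _ => by ring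
  have hterm : ∀ k ∈ Finset.univ, 0 ≤ (β k) ^ 2 * (π k - ω k) ^ 2 / 2 := fun k _ =>
    div_nonneg (mul_nonneg (sq_nonneg _) (sq_nonneg _)) (by norm_num)
  have hnonneg : 0 ≤ growthRate n lam β ω ω - growthRate n lam β ω π := by
    rw [key]; exact Finset.sum_nonneg hterm
  refine ⟨by linarith, ?_, fun h => by rw [h]⟩
  intro heq
  have hzero : ∑ k, (β k) ^ 2 * (π k - ω k) ^ 2 / 2 = 0 := by rw [← key]; linarith
  funext k
  have := (Finset.sum_eq_zero_iff_of_nonneg hterm).mp hzero k (Finset.mem_univ k)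
  have hmul : β k ^ 2 * (π k - ω k) ^ 2 = 0 := by linarith
  rcases mul_eq_zero.mp hmul with h | h
  · exact absurd h (pow_ne_zero _ (hβ k).ne')
  · have := pow_eq_zero_iff (n := 2) (by norm_num) |>.mp h
    linarith
end

section
/- Let ω > 0, C > 0, λ_0, λ_1, λ_2 ∈ ℝ, and let φ be a real polynomial function with φ(y) > 0 for all y > 0. Suppose that for all y > 0 the stationary density formula matches the exponential-family density: C φ(y) y^{-2} exp(2 ∫_1^y (ω − φ(u))/u du) = exp(λ_0 + λ_1 y + λ_2 log y), and suppose this common function q satisfies ∫_0^∞ q(y) dy = 1 and ∫_0^∞ y q(y) dy = ω. Then φ(y) = y for all y > 0. -/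
/-!
Taking logarithmic derivatives of the matching identity shows that `φ` solves the Riccati
equation `y φ' = (λ₁ y + λ₂ + 2 - 2ω) φ + 2 φ²` on `(0, ∞)`. For a polynomial the quadratic term
forces `deg φ ≤ 1`, and comparing coefficients leaves two cases. A positive constant `φ` forces
`λ₁ = 0`, and then the density is a multiple of a power of `y`, which is not integrable on
`(0, ∞)`. Otherwise `φ = q y` with `λ₁ = -2q` and `λ₂ = 2ω - 1`, so the density is a Gamma density
of shape `2ω` and rate `2q`; its mean `ω / q` must equal `ω`, whence `q = 1`.
-/

open MeasureTheory intervalIntegral Polynomial Set Real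

noncomputable def stationaryDensity (C ω : ℝ) (φ : ℝ → ℝ) (y : ℝ) : ℝ :=
  C * φ y / y ^ 2 * exp (2 * ∫ u in (1:ℝ)..y, (ω - φ u) / u)

noncomputable def expFamilyDensity (l0 l1 l2 y : ℝ) : ℝ :=
  exp (l0 + l1 * y + l2 * log y)

theorem hasDerivAt_integral_one_of_continuousOn_Ioi {g : ℝ → ℝ} (hg : ContinuousOn g (Ioi 0))
    {y : ℝ} (hy : 0 < y) : HasDerivAt (fun t => ∫ u in (1:ℝ)..t, g u) (g y) y := by
  refine integral_hasDerivAt_right ?_ (hg.stronglyMeasurableAtFilter isOpen_Ioi y hy)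
    (hg.continuousAt (Ioi_mem_nhds hy))
  exact (hg.mono fun u hu => lt_of_lt_of_le (lt_min one_pos hy) hu.1).intervalIntegrable

section Stationary

variable {C ω : ℝ} {φ φ' : ℝ → ℝ}

theorem hasDerivAt_log_stationaryDensity (hC : 0 < C)
    (hφ : ∀ y > 0, HasDerivAt φ (φ' y) y) (hφpos : ∀ y > 0, 0 < φ y) {y : ℝ} (hy : 0 < y) :
    HasDerivAt (fun t => log (stationaryDensity C ω φ t))
      (φ' y / φ y - 2 * y⁻¹ + 2 * ((ω - φ y) / y)) y := by
  have hcont : ContinuousOn (fun u => (ω - φ u) / u) (Ioi 0) := fun u hu =>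
    ((continuousAt_const.sub (hφ u hu).continuousAt).div continuousAt_id
      (ne_of_gt hu)).continuousWithinAt
  have hlog : ∀ t ∈ Ioi (0:ℝ), log (stationaryDensity C ω φ t) =
      log C + log (φ t) - 2 * log t + 2 * ∫ u in (1:ℝ)..t, (ω - φ u) / u := by
    intro t (ht : 0 < t)
    have hφt := hφpos t ht
    rw [stationaryDensity, log_mul (by positivity) (exp_ne_zero _), log_exp,
      log_div (by positivity) (by positivity), log_mul hC.ne' hφt.ne', log_pow]
    push_cast
    ring
  refine HasDerivAt.congr_of_eventuallyEq ?_ (Filter.eventuallyEq_of_mem (Ioi_mem_nhds hy) hlog)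
  exact (((((hφ y hy).log (hφpos y hy).ne').const_add _).sub
    ((hasDerivAt_log hy.ne').const_mul 2)).add
    ((hasDerivAt_integral_one_of_continuousOn_Ioi hcont hy).const_mul 2))

theorem hasDerivAt_log_expFamilyDensity (l0 l1 l2 : ℝ) {y : ℝ} (hy : 0 < y) :
    HasDerivAt (fun t => log (expFamilyDensity l0 l1 l2 t)) (l1 + l2 * y⁻¹) y := by
  simp only [expFamilyDensity, log_exp]
  exact ((((hasDerivAt_id y).const_mul l1).const_add l0).add
    ((hasDerivAt_log hy.ne').const_mul l2)).congr_deriv (by simp)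

theorem mul_deriv_eq_of_stationaryDensity_eq (hC : 0 < C)
    (hφ : ∀ y > 0, HasDerivAt φ (φ' y) y) (hφpos : ∀ y > 0, 0 < φ y) {l0 l1 l2 : ℝ}
    (hmatch : ∀ y > 0, stationaryDensity C ω φ y = expFamilyDensity l0 l1 l2 y) :
    ∀ y > 0, y * φ' y = l1 * y * φ y + (l2 + 2 - 2 * ω) * φ y + 2 * φ y ^ 2 := by
  intro y hy
  have hlog : (fun t => log (stationaryDensity C ω φ t)) =ᶠ[nhds y]
      fun t => log (expFamilyDensity l0 l1 l2 t) :=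
    Filter.eventuallyEq_of_mem (Ioi_mem_nhds hy) fun t ht => by rw [hmatch t ht]
  have h := ((hasDerivAt_log_stationaryDensity hC hφ hφpos hy).congr_of_eventuallyEq
    hlog.symm).unique (hasDerivAt_log_expFamilyDensity l0 l1 l2 hy)
  have := hφpos y hy
  field_simp at h
  linear_combination h

end Stationary

theorem Polynomial.natDegree_le_one_of_X_mul_derivative_eq {R : Type*} [CommRing R] [IsDomain R]
    {φ A : R[X]} {c : R} (hA : A.natDegree ≤ 1) (hc : c ≠ 0)
    (h : X * derivative φ = A * φ + C c * φ ^ 2) : φ.natDegree ≤ 1 := by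
  rcases eq_or_ne φ 0 with rfl | hφ
  · simp
  have hsq : (C c * φ ^ 2).natDegree = 2 * φ.natDegree := by
    rw [natDegree_C_mul hc, natDegree_pow]
  have hX : (X * derivative φ).natDegree ≤ φ.natDegree + 1 :=
    (natDegree_mul_le).trans (by have := natDegree_derivative_le φ; rw [natDegree_X]; omega)
  have hAφ : (A * φ).natDegree ≤ φ.natDegree + 1 :=
    (natDegree_mul_le).trans (by omega)
  have : 2 * φ.natDegree ≤ φ.natDegree + 1 := by
    rw [← hsq, eq_sub_of_add_eq' h.symm]
    exact (natDegree_sub_le _ _).trans (max_le hX hAφ)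
  omega

theorem affine_riccati_cases {q p a c : ℝ}
    (h : ∀ y > (0:ℝ), y * q = a * y * (q * y + p) + c * (q * y + p) + 2 * (q * y + p) ^ 2) :
    q = 0 ∧ a * p = 0 ∨ a = -2 * q ∧ p = 0 ∧ c = 1 := by
  -- The coefficients of `y ^ 2`, `y` and `1`, recovered from the values at `1`, `2`, `3`.
  have e1 := h 1 one_pos
  have e2 := h 2 two_pos
  have e3 := h 3 three_pos
  have hA : q * (a + 2 * q) = 0 := by linear_combination -(e1 - 2 * e2 + e3) / 2
  have hB : a * p + c * q + 4 * p * q - q = 0 := by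
    linear_combination (5 * e1 - 8 * e2 + 3 * e3) / 2
  have hD : p * (c + 2 * p) = 0 := by linear_combination -3 * e1 + 3 * e2 - e3
  by_cases hq : q = 0
  · exact .inl ⟨hq, by simpa [hq] using hB⟩
  have ha : a = -2 * q := by linarith [(mul_eq_zero.mp hA).resolve_left hq]
  have hcp : c + 2 * p - 1 = 0 := by
    have hqcp : q * (c + 2 * p - 1) = 0 := by linear_combination hB - p * ha
    exact (mul_eq_zero.mp hqcp).resolve_left hq
  have hp : p = 0 := by linear_combination hD - p * hcp
  exact .inr ⟨ha, hp, by linarith⟩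

theorem not_integrableOn_Ioi_exp_add_mul_log (a b : ℝ) :
    ¬ IntegrableOn (fun y => exp (a + b * log y)) (Ioi 0) := by
  intro h
  refine not_integrableOn_Ioi_rpow b
    (IntegrableOn.congr_fun (Integrable.const_mul h (exp (-a))) (fun y hy => ?_) measurableSet_Ioi)
  rw [rpow_def_of_pos hy, ← exp_add]
  ring_nf

theorem integral_Ioi_expFamilyDensity (l0 : ℝ) {l1 l2 : ℝ} (hl1 : l1 < 0) (hl2 : -1 < l2) :
    ∫ y in Ioi 0, expFamilyDensity l0 l1 l2 y =
      exp l0 * ((1 / -l1) ^ (l2 + 1) * Gamma (l2 + 1)) := by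
  rw [← integral_rpow_mul_exp_neg_mul_Ioi (by linarith) (by linarith),
    ← MeasureTheory.integral_const_mul]
  refine setIntegral_congr_fun measurableSet_Ioi fun y hy => ?_
  rw [expFamilyDensity, add_sub_cancel_right, rpow_def_of_pos hy, ← exp_add, ← exp_add]
  ring_nf

/-- The mean of a Gamma density is its shape `l2 + 1` divided by its rate `-l1`. -/
theorem integral_Ioi_mul_expFamilyDensity (l0 : ℝ) {l1 l2 : ℝ} (hl1 : l1 < 0) (hl2 : -1 < l2) :
    ∫ y in Ioi 0, y * expFamilyDensity l0 l1 l2 y =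
      (l2 + 1) / -l1 * ∫ y in Ioi 0, expFamilyDensity l0 l1 l2 y := by
  have hshift : ∫ y in Ioi 0, y * expFamilyDensity l0 l1 l2 y =
      ∫ y in Ioi 0, expFamilyDensity l0 l1 (l2 + 1) y := by
    refine setIntegral_congr_fun measurableSet_Ioi fun y (hy : 0 < y) => ?_
    rw [expFamilyDensity, expFamilyDensity, add_mul, one_mul, ← add_assoc, exp_add _ (log y),
      exp_log hy, mul_comm]
  rw [hshift, integral_Ioi_expFamilyDensity l0 hl1 hl2,
    integral_Ioi_expFamilyDensity l0 hl1 (by linarith), Gamma_add_one (by linarith),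
    rpow_add (by simpa using hl1), rpow_one]
  field_simp

/-- if a strictly positive polynomial volatility function `φ` is such that the
stationary density `C φ(y) y^{-2} exp(2 ∫_1^y (ω − φ(u))/u du)` matches the
exponential-family density `exp(λ₀ + λ₁ y + λ₂ log y)` on `(0,∞)`, and this common density
integrates to one with arithmetic mean `ω`, then `φ(y) = y` on `(0,∞)`. -/
theorem volatilityFunction_eq_identity
    (ω C : ℝ) (hω : 0 < ω) (hC : 0 < C) (l0 l1 l2 : ℝ) (φ : Polynomial ℝ)
    (hφpos : ∀ y > (0:ℝ), 0 < φ.eval y)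
    (hmatch : ∀ y > (0:ℝ),
      C * φ.eval y / y ^ 2 * Real.exp (2 * ∫ u in (1:ℝ)..y, (ω - φ.eval u) / u) =
        Real.exp (l0 + l1 * y + l2 * Real.log y))
    (hnorm : ∫ y in Set.Ioi (0:ℝ), Real.exp (l0 + l1 * y + l2 * Real.log y) = 1)
    (hmean : ∫ y in Set.Ioi (0:ℝ), y * Real.exp (l0 + l1 * y + l2 * Real.log y) = ω) :
    ∀ y > (0:ℝ), φ.eval y = y := by
  have hode := mul_deriv_eq_of_stationaryDensity_eq hC (fun y _ => φ.hasDerivAt y) hφpos hmatch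
  have hpoly : X * derivative φ = (Polynomial.C l1 * X + Polynomial.C (l2 + 2 - 2 * ω)) * φ +
      Polynomial.C 2 * φ ^ 2 :=
    eq_of_infinite_eval_eq _ _ <| (Ioi_infinite 0).mono fun y hy => by
      simp only [mem_ofPred_eq, eval_mul, eval_add, eval_pow, eval_C, eval_X]
      linear_combination hode y hy
  obtain ⟨q, p, rfl⟩ := exists_eq_X_add_C_of_natDegree_le_one
    (natDegree_le_one_of_X_mul_derivative_eq (by compute_degree!) two_ne_zero hpoly)
  have hφ1 := hφpos 1 one_pos
  simp only [eval_add, eval_mul, eval_C, eval_X, derivative_add, derivative_mul, derivative_C,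
    derivative_X, zero_mul, zero_add, mul_one, add_zero] at hode hφ1 ⊢
  rcases affine_riccati_cases hode with ⟨rfl, hl1p⟩ | ⟨rfl, rfl, hc⟩
  · have hl1 : l1 = 0 := (mul_eq_zero.mp hl1p).resolve_right (by linarith)
    subst hl1
    simp only [zero_mul, add_zero] at hnorm
    -- A non-integrable function has Bochner integral `0`, not `1`.
    simp [integral_undef (not_integrableOn_Ioi_exp_add_mul_log l0 l2)] at hnorm
  · have hq : 0 < q := by linarith
    have hmean' := integral_Ioi_mul_expFamilyDensity l0 (by linarith : -2 * q < 0)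
      (by linarith : -1 < l2)
    simp only [expFamilyDensity] at hmean'
    rw [hmean', hnorm, mul_one, show l2 + 1 = 2 * ω by linarith] at hmean
    field_simp at hmean
    intro y _
    rw [← hmean]
    ring
end
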